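/- Let A : Ω → Hermitian n×n matrices be a parameter-dependent Hermitian matrix family on a set Ω ⊆ ℝ^d. Suppose ω* ∈ Ω maximizes λ_J(A(ω)) over Ω, and let V be an n×m matrix with orthonormal columns whose column span contains the eigenvectors s₁, ..., s_J of A(ω*) corresponding to its J largest eigenvalues. Then max_{ω∈Ω} λ_J(V* A(ω) V) = max_{ω∈Ω} λ_J(A(ω)). -/

import Mathlib

open Matrix

/-- The `J`-th largest eigenvalue (0-indexed, counting multiplicity) of a Hermitian matrix. -/
noncomputable def eigLarge {n : ℕ} {A : Matrix (Fin n) (Fin n) ℂ} (hA : A.IsHermitian)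
    (J : Fin n) : ℝ :=
  (hA.eigenvalues ∘ Tuple.sort hA.eigenvalues) J.rev

/-- The spectral (operator 2-) norm of a square complex matrix. -/
noncomputable def specNorm {n : ℕ} (A : Matrix (Fin n) (Fin n) ℂ) : ℝ :=
  ‖Matrix.toEuclideanCLM (𝕜 := ℂ) A‖

/-- The `J`-th largest singular value (0-indexed) of a rectangular complex matrix. -/
noncomputable def svalLarge {p q : ℕ} (B : Matrix (Fin p) (Fin q) ℂ) (J : Fin q) : ℝ :=
  Real.sqrt (eigLarge (Matrix.isHermitian_conjTranspose_mul_self B) J)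

/-! If a subspace `S` of dimension `k + 1` satisfies `α ‖x‖² ≤ ⟪x, M x⟫` on `S`, then
`α ≤ λ_k(M)`: by counting dimensions `S` meets the span of the eigenvectors of the `n - k`
smallest eigenvalues, on which `⟪x, M x⟫ ≤ λ_k(M) ‖x‖²`. Taking for `S` the image under `V` of
the top `k + 1` eigenvectors of `Vᴴ M V` gives Cauchy interlacing `λ_J(Vᴴ A(ω) V) ≤ λ_J(A(ω))`
for every `ω`; taking the preimages under `V` of `s₀, …, s_J` gives the reverse inequality at
`ω*`. So the compressed problem attains at `ω*` the value `λ_J(A(ω*))`, which bounds it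
everywhere. -/

open Module Submodule Set

section

variable {𝕜 : Type*} [RCLike 𝕜] {n m ι κ : Type*} [Fintype m]

theorem mulVec_sum_smul [Fintype ι] (V : Matrix n m 𝕜) (c : ι → 𝕜) (w : ι → m → 𝕜) :
    V *ᵥ ∑ i, c i • w i = ∑ i, c i • V *ᵥ w i := by
  simp only [mulVec_sum, mulVec_smul]

theorem mem_span_range_mulVec_iff (V : Matrix n m 𝕜) (w : ι → m → 𝕜) {x : n → 𝕜} :
    x ∈ span 𝕜 (range fun i => V *ᵥ w i) ↔ ∃ y ∈ span 𝕜 (range w), V *ᵥ y = x := by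
  rw [show (range fun i => V *ᵥ w i) = V.mulVecLin '' range w from range_comp V.mulVecLin w,
    span_image]
  exact mem_map

variable [Fintype n]

/-- Orthonormality for the dot product `star x ⬝ᵥ y` on `n → 𝕜`, which (unlike
`EuclideanSpace 𝕜 n`) carries no inner product space structure. -/
def DotOrthonormal [DecidableEq ι] (w : ι → n → 𝕜) : Prop :=
  ∀ i j, star (w i) ⬝ᵥ w j = if i = j then 1 else 0

theorem star_mulVec_dotProduct_mulVec [DecidableEq m] {V : Matrix n m 𝕜} (hV : Vᴴ * V = 1)
    (x y : m → 𝕜) : star (V *ᵥ x) ⬝ᵥ (V *ᵥ y) = star x ⬝ᵥ y := by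
  rw [star_mulVec, ← dotProduct_mulVec, mulVec_mulVec, hV, one_mulVec]

theorem star_dotProduct_conjTranspose_mul_mul_mulVec (V : Matrix n m 𝕜) (M : Matrix n n 𝕜)
    (x : m → 𝕜) : star x ⬝ᵥ (Vᴴ * M * V) *ᵥ x = star (V *ᵥ x) ⬝ᵥ M *ᵥ V *ᵥ x := by
  rw [star_mulVec, ← dotProduct_mulVec, mulVec_mulVec, mulVec_mulVec]

theorem Orthonormal.dotOrthonormal_ofLp [DecidableEq ι] {v : ι → EuclideanSpace 𝕜 n}
    (hv : Orthonormal 𝕜 v) : DotOrthonormal fun i => (v i : n → 𝕜) :=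
  fun i j => by
    rw [dotProduct_comm, ← EuclideanSpace.inner_eq_star_dotProduct, orthonormal_iff_ite.mp hv]

namespace DotOrthonormal

variable [DecidableEq ι] {w : ι → n → 𝕜}

theorem comp [DecidableEq κ] (hw : DotOrthonormal w) {f : κ → ι} (hf : f.Injective) :
    DotOrthonormal (w ∘ f) :=
  fun i j => by simp only [Function.comp_apply, hw (f i) (f j), hf.eq_iff]

theorem mulVec [DecidableEq m] {w : ι → m → 𝕜} (hw : DotOrthonormal w) {V : Matrix n m 𝕜}
    (hV : Vᴴ * V = 1) : DotOrthonormal fun i => V *ᵥ w i :=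
  fun i j => by rw [star_mulVec_dotProduct_mulVec hV, hw]

variable [Fintype ι]

theorem star_sum_dotProduct_sum (hw : DotOrthonormal w) (c d : ι → 𝕜) :
    star (∑ i, c i • w i) ⬝ᵥ ∑ i, d i • w i = ∑ i, star (c i) * d i := by
  simp [star_sum, sum_dotProduct, dotProduct_sum, hw _ _, mul_comm]

theorem linearIndependent (hw : DotOrthonormal w) : LinearIndependent 𝕜 w := by
  refine Fintype.linearIndependent_iff.mpr fun c hc j => ?_
  simpa [dotProduct_sum, hw _ _] using congrArg (star (w j) ⬝ᵥ ·) hc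

theorem finrank_span_range (hw : DotOrthonormal w) :
    finrank 𝕜 (span 𝕜 (range w)) = Fintype.card ι :=
  finrank_span_eq_card hw.linearIndependent

variable {M : Matrix n n 𝕜} {μ : ι → ℝ}

theorem re_star_sum_dotProduct_sum (hw : DotOrthonormal w) (c : ι → 𝕜) :
    RCLike.re (star (∑ i, c i • w i) ⬝ᵥ ∑ i, c i • w i) = ∑ i, ‖c i‖ ^ 2 := by
  rw [hw.star_sum_dotProduct_sum, map_sum]
  refine Finset.sum_congr rfl fun i _ => ?_
  rw [RCLike.star_def, RCLike.conj_mul, ← RCLike.ofReal_pow, RCLike.ofReal_re]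

theorem re_star_sum_dotProduct_mulVec_sum (hw : DotOrthonormal w)
    (hμ : ∀ i, M *ᵥ w i = (μ i : 𝕜) • w i) (c : ι → 𝕜) :
    RCLike.re (star (∑ i, c i • w i) ⬝ᵥ M *ᵥ ∑ i, c i • w i) = ∑ i, ‖c i‖ ^ 2 * μ i := by
  have hMx : M *ᵥ ∑ i, c i • w i = ∑ i, (c i * μ i) • w i := by
    simp only [mulVec_sum_smul, hμ, smul_smul]
  rw [hMx, hw.star_sum_dotProduct_sum, map_sum]
  refine Finset.sum_congr rfl fun i _ => ?_
  rw [RCLike.star_def, ← mul_assoc, RCLike.conj_mul, ← RCLike.ofReal_pow, ← RCLike.ofReal_mul,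
    RCLike.ofReal_re]

theorem mul_re_le_re_of_mem_span (hw : DotOrthonormal w) (hμ : ∀ i, M *ᵥ w i = (μ i : 𝕜) • w i)
    {β : ℝ} (hβ : ∀ i, β ≤ μ i) {x : n → 𝕜} (hx : x ∈ span 𝕜 (range w)) :
    β * RCLike.re (star x ⬝ᵥ x) ≤ RCLike.re (star x ⬝ᵥ M *ᵥ x) := by
  obtain ⟨c, rfl⟩ := mem_span_range_iff_exists_fun 𝕜 |>.mp hx
  rw [hw.re_star_sum_dotProduct_sum, hw.re_star_sum_dotProduct_mulVec_sum hμ, Finset.mul_sum]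
  refine Finset.sum_le_sum fun i _ => ?_
  rw [mul_comm]
  exact mul_le_mul_of_nonneg_left (hβ i) (sq_nonneg _)

theorem re_le_mul_re_of_mem_span (hw : DotOrthonormal w) (hμ : ∀ i, M *ᵥ w i = (μ i : 𝕜) • w i)
    {β : ℝ} (hβ : ∀ i, μ i ≤ β) {x : n → 𝕜} (hx : x ∈ span 𝕜 (range w)) :
    RCLike.re (star x ⬝ᵥ M *ᵥ x) ≤ β * RCLike.re (star x ⬝ᵥ x) := by
  obtain ⟨c, rfl⟩ := mem_span_range_iff_exists_fun 𝕜 |>.mp hx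
  rw [hw.re_star_sum_dotProduct_sum, hw.re_star_sum_dotProduct_mulVec_sum hμ, Finset.mul_sum]
  refine Finset.sum_le_sum fun i _ => ?_
  rw [mul_comm β]
  exact mul_le_mul_of_nonneg_left (hβ i) (sq_nonneg _)

end DotOrthonormal
end

namespace Matrix.IsHermitian

variable {n m : ℕ} {M : Matrix (Fin n) (Fin n) ℂ} (hM : M.IsHermitian)

theorem eigLarge_antitone : Antitone (eigLarge hM) :=
  fun _ _ hij => Tuple.monotone_sort _ (Fin.rev_anti hij)

noncomputable def eigvecLarge (j : Fin n) : Fin n → ℂ :=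
  hM.eigenvectorBasis (Tuple.sort hM.eigenvalues j.rev)

theorem dotOrthonormal_eigvecLarge : DotOrthonormal hM.eigvecLarge :=
  hM.eigenvectorBasis.orthonormal.dotOrthonormal_ofLp.comp
    ((Tuple.sort _).injective.comp Fin.rev_injective)

theorem mulVec_eigvecLarge (j : Fin n) :
    M *ᵥ hM.eigvecLarge j = (eigLarge hM j : ℂ) • hM.eigvecLarge j := by
  rw [eigvecLarge, hM.mulVec_eigenvectorBasis, Complex.coe_smul]
  rfl

open scoped ComplexOrder in
theorem le_eigLarge_of_lt_finrank (k : Fin n) {S : Submodule ℂ (Fin n → ℂ)}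
    (hS : (k : ℕ) < finrank ℂ S) {α : ℝ}
    (hα : ∀ x ∈ S, α * RCLike.re (star x ⬝ᵥ x) ≤ RCLike.re (star x ⬝ᵥ M *ᵥ x)) :
    α ≤ eigLarge hM k := by
  let low : Fin (n - k) → Fin n := fun j => ⟨k + j, by omega⟩
  have hlow : DotOrthonormal (hM.eigvecLarge ∘ low) :=
    hM.dotOrthonormal_eigvecLarge.comp fun i j h => Fin.ext (by simpa [low] using h)
  obtain ⟨x, hxS, hxT, hx0⟩ : ∃ x ∈ S, x ∈ span ℂ (range (hM.eigvecLarge ∘ low)) ∧ x ≠ 0 := by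
    by_contra! h
    have := Submodule.finrank_add_finrank_le_of_disjoint (disjoint_def.mpr h)
    rw [hlow.finrank_span_range, Fintype.card_fin, finrank_fin_fun] at this
    omega
  have hupper := hlow.re_le_mul_re_of_mem_span (β := eigLarge hM k)
    (fun j => hM.mulVec_eigvecLarge _)
    (fun j => hM.eigLarge_antitone (Fin.le_def.mpr (by simp [low]))) hxT
  have hpos : 0 < RCLike.re (star x ⬝ᵥ x) :=
    (Complex.pos_iff.mp (dotProduct_star_self_pos_iff.mpr hx0)).1
  exact le_of_mul_le_mul_right ((hα x hxS).trans hupper) hpos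

theorem eigLarge_conjTranspose_mul_mul_le {V : Matrix (Fin n) (Fin m) ℂ} (hV : Vᴴ * V = 1)
    (hB : (Vᴴ * M * V).IsHermitian) {k : ℕ} (hkm : k < m) (hkn : k < n) :
    eigLarge hB ⟨k, hkm⟩ ≤ eigLarge hM ⟨k, hkn⟩ := by
  let w : Fin (k + 1) → Fin m → ℂ := fun i => hB.eigvecLarge (Fin.castLE hkm i)
  have hw : DotOrthonormal w := hB.dotOrthonormal_eigvecLarge.comp (Fin.castLE_injective hkm)
  refine hM.le_eigLarge_of_lt_finrank ⟨k, hkn⟩ (S := span ℂ (range fun i => V *ᵥ w i))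
    (by rw [(hw.mulVec hV).finrank_span_range, Fintype.card_fin]; exact k.lt_succ_self)
    fun x hx => ?_
  obtain ⟨y, hy, rfl⟩ := (mem_span_range_mulVec_iff V w).mp hx
  rw [star_mulVec_dotProduct_mulVec hV, ← star_dotProduct_conjTranspose_mul_mul_mulVec]
  exact hw.mul_re_le_re_of_mem_span (fun i => hB.mulVec_eigvecLarge _)
    (fun i => hB.eigLarge_antitone (Fin.le_def.mpr (by simp; omega))) hy

end Matrix.IsHermitian

theorem le_eigLarge_conjTranspose_mul_mul_of_eigenvectors {n m : ℕ} {ι : Type*} [Fintype ι]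
    [DecidableEq ι] {M : Matrix (Fin n) (Fin n) ℂ} {V : Matrix (Fin n) (Fin m) ℂ}
    (hV : Vᴴ * V = 1) (hB : (Vᴴ * M * V).IsHermitian) (k : Fin m) {w : ι → Fin n → ℂ}
    (hw : DotOrthonormal w) (hcard : (k : ℕ) < Fintype.card ι) {μ : ι → ℝ}
    (hμ : ∀ i, M *ᵥ w i = (μ i : ℂ) • w i) {α : ℝ} (hα : ∀ i, α ≤ μ i)
    (hrange : ∀ i, ∃ c, w i = V *ᵥ c) : α ≤ eigLarge hB k := by
  choose c hc using hrange
  obtain rfl : w = fun i => V *ᵥ c i := funext hc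
  have hc_orth : DotOrthonormal c :=
    fun i j => (star_mulVec_dotProduct_mulVec hV _ _).symm.trans (hw i j)
  refine hB.le_eigLarge_of_lt_finrank k (S := span ℂ (range c))
    (by rwa [hc_orth.finrank_span_range]) fun y hy => ?_
  rw [star_dotProduct_conjTranspose_mul_mul_mulVec, ← star_mulVec_dotProduct_mulVec hV y y]
  exact hw.mul_re_le_re_of_mem_span hμ hα ((mem_span_range_mulVec_iff V c).mpr ⟨y, hy, rfl⟩)

theorem stmt5_general (d n m J : ℕ) (hJm : J < m) (hJn : J < n)
    (Ω : Set (EuclideanSpace ℝ (Fin d)))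
    (A : EuclideanSpace ℝ (Fin d) → Matrix (Fin n) (Fin n) ℂ)
    (hA : ∀ ω, (A ω).IsHermitian)
    (ωs : EuclideanSpace ℝ (Fin d))
    (hmax : ∀ ω ∈ Ω, eigLarge (hA ω) ⟨J, hJn⟩ ≤ eigLarge (hA ωs) ⟨J, hJn⟩)
    (s : Fin n → (Fin n → ℂ))
    (hortho : ∀ i j, star (s i) ⬝ᵥ s j = if i = j then 1 else 0)
    (heig : ∀ i, A ωs *ᵥ s i = (eigLarge (hA ωs) i : ℂ) • s i)
    (V : Matrix (Fin n) (Fin m) ℂ) (hV : Vᴴ * V = 1)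
    (hspan : ∀ i : Fin n, (i : ℕ) ≤ J → ∃ c : Fin m → ℂ, s i = V *ᵥ c)
    (hC : ∀ ω, (Vᴴ * A ω * V).IsHermitian) :
    eigLarge (hC ωs) ⟨J, hJm⟩ = eigLarge (hA ωs) ⟨J, hJn⟩ ∧
    ∀ ω ∈ Ω, eigLarge (hC ω) ⟨J, hJm⟩ ≤ eigLarge (hC ωs) ⟨J, hJm⟩ := by
  have hcompress (ω) : eigLarge (hC ω) ⟨J, hJm⟩ ≤ eigLarge (hA ω) ⟨J, hJn⟩ :=
    (hA ω).eigLarge_conjTranspose_mul_mul_le hV (hC ω) hJm hJn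
  have hlift : eigLarge (hA ωs) ⟨J, hJn⟩ ≤ eigLarge (hC ωs) ⟨J, hJm⟩ :=
    le_eigLarge_conjTranspose_mul_mul_of_eigenvectors hV (hC ωs) ⟨J, hJm⟩
      (w := s ∘ Fin.castLE hJn) (DotOrthonormal.comp hortho (Fin.castLE_injective hJn))
      (by simp) (fun i => heig _)
      (fun i => (hA ωs).eigLarge_antitone (Fin.le_def.mpr (by simp; omega)))
      (fun i => hspan _ (by simp; omega))
  have hattained := le_antisymm (hcompress ωs) hlift
  exact ⟨hattained, fun ω hω => (hcompress ω).trans ((hmax ω hω).trans hattained.ge)⟩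

/-- low-rank property of eigenvalue maximization: if the column span of `V`
contains eigenvectors for the `J+1` largest eigenvalues of `A(ω*)` at a global maximizer
`ω*` of `λ_J(A(ω))` over `Ω`, then the reduced problem has the same globally maximal
value, attained at `ω*` (0-indexed `J`). -/
theorem stmt5 (d n m J : ℕ) (hJm : J < m) (hJn : J < n)
    (Ω : Set (EuclideanSpace ℝ (Fin d)))
    (A : EuclideanSpace ℝ (Fin d) → Matrix (Fin n) (Fin n) ℂ)
    (hA : ∀ ω, (A ω).IsHermitian)
    (ωs : EuclideanSpace ℝ (Fin d)) (hωs : ωs ∈ Ω)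
    (hmax : ∀ ω ∈ Ω, eigLarge (hA ω) ⟨J, hJn⟩ ≤ eigLarge (hA ωs) ⟨J, hJn⟩)
    (s : Fin n → (Fin n → ℂ))
    (hortho : ∀ i j, star (s i) ⬝ᵥ s j = if i = j then 1 else 0)
    (heig : ∀ i, A ωs *ᵥ s i = (eigLarge (hA ωs) i : ℂ) • s i)
    (V : Matrix (Fin n) (Fin m) ℂ) (hV : Vᴴ * V = 1)
    (hspan : ∀ i : Fin n, (i : ℕ) ≤ J → ∃ c : Fin m → ℂ, s i = V *ᵥ c)
    (hC : ∀ ω, (Vᴴ * A ω * V).IsHermitian) :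
    eigLarge (hC ωs) ⟨J, hJm⟩ = eigLarge (hA ωs) ⟨J, hJn⟩ ∧
    ∀ ω ∈ Ω, eigLarge (hC ω) ⟨J, hJm⟩ ≤ eigLarge (hC ωs) ⟨J, hJm⟩ :=
  stmt5_general d n m J hJm hJn Ω A hA ωs hmax s hortho heig V hV hspan hC
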